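/- The set of subfields F of the algebraic closure of ℚ that are Hilbertian is a G_δ subset of the space 𝓔 of all subfields of the algebraic closure of ℚ; explicitly, it equals a countable intersection of the open sets V_{f₁,…,fₙ,g} described as follows: for n > 0, irreducible f₁,…,fₙ ∈ Q̄[X,Y] monic of degree at least 2 in Y, and nonzero g ∈ Q̄[X], let V_{f₁,…,fₙ,g} = (𝓔 \ {F ∈ 𝓔 : f₁,…,fₙ,g all have coefficients in F}) ∪ ⋃_{x ∈ Q̄, g(x)≠0} ⋂_{i=1}^n ⋂_{y ∈ Q̄, fᵢ(x,y)=0} {F ∈ 𝓔 : x ∈ F and y ∉ F}. -/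

import Mathlib

open FirstOrder Topology

noncomputable section

/-- `Q̄`, the algebraic closure of `ℚ`. -/
abbrev Qbar : Type := AlgebraicClosure ℚ

/-- `Prop` with the discrete two-point topology. -/
def propDiscrete : TopologicalSpace Prop := ⊥

/-- The product topology on the powerset `2^Q̄`, identified with `Set Q̄ = Q̄ → Prop`,
where each factor `Prop` carries the discrete two-point topology. -/
def powersetTopology : TopologicalSpace (Set Qbar) :=
  @Pi.topologicalSpace Qbar (fun _ => Prop) (fun _ => propDiscrete)

/-- The space `𝓔` of all subfields of `Q̄`, with the subspace topology induced from `2^Q̄`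
via the identification of a subfield with its underlying set of elements. -/
instance subfieldTopology : TopologicalSpace (Subfield Qbar) :=
  powersetTopology.induced (fun F => (F : Set Qbar))

/-- A subfield `F` of `Q̄` is Hilbertian if for all `n ≥ 1`, all absolutely irreducible
`f₁, …, fₙ ∈ F[X,Y]` (viewed as polynomials in `Y` over `F[X]`) that are monic of degree
at least `2` in `Y`, and all nonzero `g ∈ F[X]`, there is `x ∈ F` with `g(x) ≠ 0` such that
each one-variable polynomial `fᵢ(x,Y)` has no root in `F`. -/
def IsHilbertian (F : Subfield Qbar) : Prop :=
  ∀ (n : ℕ), 0 < n → ∀ (f : Fin n → Polynomial (Polynomial F)) (g : Polynomial F),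
    (∀ i, Irreducible ((f i).map (Polynomial.mapRingHom F.subtype))) →
    (∀ i, (f i).Monic) →
    (∀ i, 2 ≤ (f i).natDegree) →
    g ≠ 0 →
    ∃ x : F, Polynomial.eval x g ≠ 0 ∧
      ∀ i, ∀ y : F, Polynomial.eval y ((f i).map (Polynomial.evalRingHom x)) ≠ 0

/-- The set `V_{f₁,…,fₙ,g}
  = (𝓔 \ {F : f₁,…,fₙ,g ∈ F[X,Y]})
    ∪ ⋃_{x ∈ Q̄, g(x) ≠ 0} ⋂_{i=1}^n ⋂_{y ∈ Q̄, fᵢ(x,y) = 0} {F : x ∈ F, y ∉ F}`,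
where the `fᵢ ∈ Q̄[X,Y]` are viewed as polynomials in `Y` over `Q̄[X]`. -/
def V (n : ℕ) (f : Fin n → Polynomial (Polynomial Qbar)) (g : Polynomial Qbar) :
    Set (Subfield Qbar) :=
  {F | (∀ i j k, ((f i).coeff j).coeff k ∈ F) ∧ (∀ k, g.coeff k ∈ F)}ᶜ ∪
    ⋃ (x : Qbar) (_ : Polynomial.eval x g ≠ 0),
      ⋂ (i : Fin n),
        ⋂ (y : Qbar) (_ : Polynomial.eval y ((f i).map (Polynomial.evalRingHom x)) = 0),
          {F | x ∈ F ∧ y ∉ F}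

/-- The parameters `(n, (f₁,…,fₙ), g)` indexing the sets `V_{f₁,…,fₙ,g}`:
`n > 0`, the `fᵢ ∈ Q̄[X,Y]` are irreducible and monic of degree at least `2` in `Y`,
and `0 ≠ g ∈ Q̄[X]`. -/
def VParams : Set (Σ n : ℕ, (Fin n → Polynomial (Polynomial Qbar)) × Polynomial Qbar) :=
  {p | 0 < p.1 ∧ (∀ i, Irreducible (p.2.1 i)) ∧ (∀ i, (p.2.1 i).Monic) ∧
    (∀ i, 2 ≤ (p.2.1 i).natDegree) ∧ p.2.2 ≠ 0}


/-! Each `V_{f,g}` is open: the clause "`f, g` have coefficients in `F`" is an intersection of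
the clopen conditions `a ∈ F`, and for fixed `x` the monic `fᵢ(x,Y)` have finitely many roots, so
the remaining clause is a union of finite intersections of clopen sets. When `f, g` have
coefficients in `F` they descend to `F[X,Y]` and `F[X]`, and `F ∈ V_{f,g}` says exactly that some
`x` is a witness of Hilbertianity for the descended polynomials; that `x` lies in `F` because
`f₁(x,Y)` has a root in the algebraically closed `Q̄`. The intersection is countable since `Q̄` is. -/

open Polynomial

instance : Countable Qbar :=
  haveI : Algebra.IsAlgebraic ℚ Qbar := AlgebraicClosure.isAlgebraic ℚ
  Cardinal.mk_le_aleph0_iff.mp <|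
    (Algebra.IsAlgebraic.cardinalMk_le_max ℚ Qbar).trans (by simp)

instance {R : Type*} [Semiring R] [Countable R] : Countable R[X] :=
  (AddMonoidAlgebra.coeff_injective.comp toFinsupp_injective).countable

lemma isClopen_setOf_mem (a : Qbar) : IsClopen {F : Subfield Qbar | a ∈ F} := by
  let _ := propDiscrete
  have : DiscreteTopology Prop := ⟨rfl⟩
  have hcont : Continuous fun F : Subfield Qbar => a ∈ F :=
    (continuous_apply (A := fun _ : Qbar => Prop) a).comp
      (continuous_induced_dom (t := powersetTopology))
  exact (isClopen_discrete {p : Prop | p}).preimage hcont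

lemma isOpen_V {n : ℕ} {f : Fin n → Qbar[X][X]} (g : Qbar[X]) (hmon : ∀ i, (f i).Monic) :
    IsOpen (V n f g) := by
  refine IsOpen.union (isOpen_compl_iff.2 ?_) ?_
  · simp only [Set.ofPred_and, Set.ofPred_forall]
    exact (isClosed_iInter fun i => isClosed_iInter fun j => isClosed_iInter fun k =>
      (isClopen_setOf_mem _).isClosed).inter
        (isClosed_iInter fun k => (isClopen_setOf_mem _).isClosed)
  · refine isOpen_iUnion fun x => isOpen_iUnion fun _ => isOpen_iInter_of_finite fun i => ?_
    exact (finite_setOfPred_isRoot ((hmon i).map (evalRingHom x)).ne_zero).isOpen_biInter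
      fun y _ => (isClopen_setOf_mem x).isOpen.inter (isClopen_setOf_mem y).compl.isOpen

lemma mem_V_iff {n : ℕ} {f : Fin n → Qbar[X][X]} {g : Qbar[X]} {F : Subfield Qbar} :
    F ∈ V n f g ↔ (∀ i j k, ((f i).coeff j).coeff k ∈ F) → (∀ k, g.coeff k ∈ F) →
      ∃ x, g.eval x ≠ 0 ∧ ∀ i y, ((f i).map (evalRingHom x)).eval y = 0 → x ∈ F ∧ y ∉ F := by
  simp [V, or_iff_not_imp_left]

lemma map_mapRingHom_map_evalRingHom_eval {R S : Type*} [CommSemiring R] [CommSemiring S]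
    (φ : R →+* S) (f : R[X][X]) (x y : R) :
    ((f.map (mapRingHom φ)).map (evalRingHom (φ x))).eval (φ y) =
      φ ((f.map (evalRingHom x)).eval y) := by
  simp only [map_evalRingHom_eval, map_mapRingHom_evalEval]

lemma exists_eval_map_evalRingHom_eq_zero {K : Type*} [Field K] [IsAlgClosed K] {f : K[X][X]}
    (hmon : f.Monic) (hdeg : f.natDegree ≠ 0) (x : K) :
    ∃ y, (f.map (evalRingHom x)).eval y = 0 :=
  IsAlgClosed.exists_root _ <| by
    rw [degree_eq_natDegree (hmon.map _).ne_zero, hmon.natDegree_map]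
    exact_mod_cast hdeg

lemma Subfield.exists_map_subtype_eq {K : Type*} [Field K] {F : Subfield K} {g : K[X]}
    (hg : ∀ k, g.coeff k ∈ F) : ∃ g' : F[X], g'.map F.subtype = g :=
  (lifts_iff_coeff_lifts g).2 fun k => ⟨⟨_, hg k⟩, rfl⟩

lemma Subfield.exists_map_mapRingHom_subtype_eq {K : Type*} [Field K] {F : Subfield K}
    {f : K[X][X]} (hf : ∀ j k, (f.coeff j).coeff k ∈ F) :
    ∃ f' : F[X][X], f'.map (mapRingHom F.subtype) = f :=
  (lifts_iff_coeff_lifts f).2 fun j => Subfield.exists_map_subtype_eq (hf j)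

lemma map_mem_V_iff {F : Subfield Qbar} {n : ℕ} (f : Fin n → F[X][X]) (g : F[X]) (i₀ : Fin n)
    (hmon : (f i₀).Monic) (hdeg : (f i₀).natDegree ≠ 0) :
    F ∈ V n (fun i => (f i).map (mapRingHom F.subtype)) (g.map F.subtype) ↔
      ∃ x : F, g.eval x ≠ 0 ∧ ∀ i y, ((f i).map (evalRingHom x)).eval y ≠ 0 := by
  have hf (i) (x y : F) := map_mapRingHom_map_evalRingHom_eval F.subtype (f i) x y
  have hg (x : F) := eval_map_apply (p := g) (f := F.subtype) x
  simp only [Subfield.coe_subtype] at hf hg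
  rw [mem_V_iff]
  simp only [coeff_map, coe_mapRingHom, Subfield.coe_subtype, SetLike.coe_mem, implies_true,
    forall_const]
  constructor
  · rintro ⟨x, hgx, hx⟩
    obtain ⟨y, hy⟩ := exists_eval_map_evalRingHom_eq_zero (hmon.map (mapRingHom F.subtype))
      (by rwa [hmon.natDegree_map]) x
    lift x to F using (hx i₀ y hy).1
    refine ⟨x, fun h => hgx (by rw [hg, h, ZeroMemClass.coe_zero]), fun i y h => ?_⟩
    exact (hx i y (by rw [hf, h, ZeroMemClass.coe_zero])).2 y.2
  · rintro ⟨x, hgx, hx⟩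
    refine ⟨x, by simpa [hg] using hgx, fun i y hy => ⟨x.2, fun hyF => ?_⟩⟩
    lift y to F using hyF
    exact hx i y (by simpa [hf] using hy)

lemma setOf_isHilbertian_eq_iInter_V :
    {F : Subfield Qbar | IsHilbertian F} = ⋂ p ∈ VParams, V p.1 p.2.1 p.2.2 := by
  ext F
  simp only [Set.mem_ofPred_eq, Set.mem_iInter]
  have hinj : Function.Injective F.subtype := Subtype.val_injective
  constructor
  · rintro hF ⟨n, f, g⟩ ⟨hn, hirr, hmon, hdeg, hg⟩
    by_cases hcoeff : (∀ i j k, ((f i).coeff j).coeff k ∈ F) ∧ ∀ k, g.coeff k ∈ F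
    swap
    · exact Or.inl hcoeff
    choose f' hf' using fun i => Subfield.exists_map_mapRingHom_subtype_eq (hcoeff.1 i)
    obtain ⟨g', rfl⟩ := Subfield.exists_map_subtype_eq hcoeff.2
    obtain rfl : (fun i => (f' i).map (mapRingHom F.subtype)) = f := funext hf'
    have hinj' : Function.Injective (mapRingHom F.subtype) := map_injective _ hinj
    have hmon' i : (f' i).Monic := monic_of_injective hinj' (hmon i)
    have hdeg' i : 2 ≤ (f' i).natDegree := by
      simpa [natDegree_map_eq_of_injective hinj'] using hdeg i
    rw [map_mem_V_iff f' g' ⟨0, hn⟩ (hmon' _) (by linarith [hdeg' ⟨0, hn⟩])]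
    exact hF n hn f' g' hirr hmon' hdeg' (by rintro rfl; exact hg (Polynomial.map_zero _))
  · intro hF n hn f g hirr hmon hdeg hg
    rw [← map_mem_V_iff f g ⟨0, hn⟩ (hmon _) (by linarith [hdeg ⟨0, hn⟩])]
    refine hF ⟨n, _, _⟩ ⟨hn, hirr, fun i => (hmon i).map _, fun i => ?_, ?_⟩
    · exact ((hmon i).natDegree_map (mapRingHom F.subtype)).symm ▸ hdeg i
    · exact (Polynomial.map_ne_zero_iff hinj).2 hg

/-- The set of Hilbertian subfields of `Q̄` is a `G_δ` subset of `𝓔`: explicitly, it is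
the intersection of the sets `V_{f₁,…,fₙ,g}`, each of these sets is open, and this is a
countable intersection. -/
theorem hilbertian_Gdelta_explicit :
    ({F : Subfield Qbar | IsHilbertian F} = ⋂ p ∈ VParams, V p.1 p.2.1 p.2.2) ∧
      (∀ p ∈ VParams, IsOpen (V p.1 p.2.1 p.2.2)) ∧
      VParams.Countable ∧
      IsGδ {F : Subfield Qbar | IsHilbertian F} := by
  have hopen : ∀ p ∈ VParams, IsOpen (V p.1 p.2.1 p.2.2) := fun p hp => isOpen_V _ hp.2.2.1
  have hcount : VParams.Countable := Set.to_countable _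
  refine ⟨setOf_isHilbertian_eq_iInter_V, hopen, hcount, ?_⟩
  rw [setOf_isHilbertian_eq_iInter_V]
  exact .biInter_of_isOpen hcount hopen

end
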